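/- Suppose alternative i ∈ [d] is a Condorcet winner, i.e., M(i,j) > 1/2 for all j ≠ i; let α = min_{j≠i} M(i,j) − 1/2 and β = (1−α)/(1+2α) ∈ (0,1). Let δ, τ > 0 with δ < 1, let r > 0 satisfy r ≤ 1/d and r ≤ αδ/2, and let N ∈ ℕ satisfy r/(Nd) ≥ 2(1−r)/N² and N(δ − r/α) ≥ ⌈log(τ(1−β))/log(β)⌉. Then the unique stationary distribution π of the urn process with parameters N and r satisfies π({p ∈ Δ^{(N)} : p_i ≥ 1−δ}) ≥ 1 − τ; that is, in the stationary distribution, with probability at least 1−τ at least a (1−δ) fraction of the balls are labeled with the Condorcet winner. -/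

import Mathlib

/-
Cut the state space between the levels `{v_i ≤ m}` and `{v_i > m}` of the Condorcet winner's ball
count. Under a stationary distribution the probability flow across the cut is balanced, and since
a step changes `v_i` by at most one, only the levels `m` and `m + 1` exchange flow. With
`p = v_i / N`, from level `m` the winner gains a ball with probability at least
`2(1-r)(1/2+α) p(1-p) + (r/d)(1-p)`, and from level `m + 1` it loses one with probability at most
`2(1-r)(1/2-α) p(1-p) + (r/d)(d-1) p`. While mutation is dominated by the selection margin, i.e.
`m + 1 ≤ N (1 - r/α)`, the second is at most `β` times the first, hence
`π(v_i = m) ≤ β π(v_i = m + 1)`. So the mass of the levels `≤ N (1 - r/α) - K` is at most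
`β^K / (1 - β)`, which is `≤ τ` for `K = ⌈log (τ(1-β)) / log β⌉`, and the condition on `N` puts
`N (1 - δ)` below these levels.
-/

open Finset

/-- The states of an urn with `N` balls and `d` labels: `v i` is the number of balls
labeled `i`; the corresponding lottery is `p i = v i / N ∈ Δ^{(N)}`. -/
abbrev UrnState (d N : ℕ) := {v : Fin d → Fin (N + 1) // ∑ k, (v k : ℕ) = N}

/-- Transition probabilities of the urn process on `Δ^{(N)}` (states as ball counts):
`P(p, p + e_i/N − e_j/N) = 2(1−r) p_i p_j M(i,j) + (r/d) p_j` for `i ≠ j`, and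
`P(p, p) = (1−r) Σ_k p_k² + r/d`, where `p = v/N`. -/
noncomputable def urnTransN (d N : ℕ) (M : Matrix (Fin d) (Fin d) ℝ) (r : ℝ)
    (v w : UrnState d N) : ℝ :=
  (if w = v then (1 - r) * ∑ k, ((v.1 k : ℝ) / N) ^ 2 + r / (d : ℝ) else 0) +
  ∑ i, ∑ j,
    if i ≠ j ∧ (∀ k, ((w.1 k : ℕ) : ℤ) =
        ((v.1 k : ℕ) : ℤ) + (if k = i then 1 else 0) - (if k = j then 1 else 0)) then
      2 * (1 - r) * ((v.1 i : ℝ) / N) * ((v.1 j : ℝ) / N) * M i j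
        + (r / (d : ℝ)) * ((v.1 j : ℝ) / N)
    else 0

theorem sum_ite_ne_eq_sub {ι G : Type*} [Fintype ι] [DecidableEq ι] [AddCommGroup G]
    (f : ι → G) (i : ι) : ∑ k, (if k ≠ i then f k else 0) = ∑ k, f k - f i := by
  rw [← sum_filter, filter_ne', sum_erase_eq_sub (mem_univ i)]

theorem sum_ite_ne_eq_sub_diag {ι G : Type*} [Fintype ι] [DecidableEq ι] [AddCommGroup G]
    (X : ι → ι → G) : ∑ a, ∑ b, (if a ≠ b then X a b else 0) = ∑ a, ∑ b, X a b - ∑ a, X a a := by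
  rw [← sum_sub_distrib]
  refine sum_congr rfl fun a _ => ?_
  rw [← sum_filter, filter_ne, sum_erase_eq_sub (mem_univ a)]

theorem sum_filter_le_eq_sum_range {ι : Type*} [Fintype ι] (π : ι → ℝ) (f : ι → ℕ) (k : ℕ) :
    ∑ v with f v ≤ k, π v = ∑ m ∈ range (k + 1), ∑ v with f v = m, π v := by
  rw [← sum_fiberwise_of_maps_to (g := f) (t := range (k + 1)) fun v hv =>
    mem_range.mpr (Nat.lt_succ_of_le (mem_filter.mp hv).2)]
  refine sum_congr rfl fun m hm => ?_
  rw [filter_filter]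
  have := mem_range.mp hm
  exact sum_congr (filter_congr fun v _ => ⟨And.right, fun h => ⟨by omega, h⟩⟩) fun _ _ => rfl

section StationaryCut

variable {Ω : Type*} [Fintype Ω] {P : Ω → Ω → ℝ} {π : Ω → ℝ}

theorem stationary_flow_out_le_flow_in (hπ0 : ∀ v, 0 ≤ π v) (hP1 : ∀ v, ∑ w, P v w ≤ 1)
    (hπ : ∀ w, ∑ v, π v * P v w = π w) (p : Ω → Prop) [DecidablePred p] :
    ∑ v with p v, π v * ∑ w with ¬p w, P v w ≤ ∑ v with ¬p v, π v * ∑ w with p w, P v w := by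
  have hin : ∑ w with p w, π w = ∑ v, π v * ∑ w with p w, P v w := by
    simp_rw [mul_sum]
    rw [sum_comm]
    exact sum_congr rfl fun w _ => (hπ w).symm
  have hrow : ∑ v with p v, π v * ((∑ w with p w, P v w) + ∑ w with ¬p w, P v w)
      ≤ ∑ v with p v, π v := by
    refine sum_le_sum fun v _ => ?_
    rw [sum_filter_add_sum_filter_not]
    exact mul_le_of_le_one_right (hπ0 v) (hP1 v)
  rw [← sum_filter_add_sum_filter_not univ p] at hin
  simp only [mul_add, sum_add_distrib] at hrow
  linarith

theorem mul_sum_level_le_mul_sum_level_succ (hπ0 : ∀ v, 0 ≤ π v) (hP0 : ∀ v w, 0 ≤ P v w)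
    (hP1 : ∀ v, ∑ w, P v w ≤ 1) (hπ : ∀ w, ∑ v, π v * P v w = π w)
    (f : Ω → ℕ) (hjump : ∀ v w, f w + 1 < f v → P v w = 0) (m : ℕ) {L U : ℝ}
    (hL : ∀ v, f v = m → L ≤ ∑ w with f v < f w, P v w)
    (hU : ∀ v, f v = m + 1 → ∑ w with f w < f v, P v w ≤ U) :
    L * ∑ v with f v = m, π v ≤ U * ∑ v with f v = m + 1, π v := by
  have hout : L * ∑ v with f v = m, π v ≤
      ∑ v with f v ≤ m, π v * ∑ w with ¬f w ≤ m, P v w := by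
    rw [mul_sum]
    refine (sum_le_sum fun v hv => ?_).trans (sum_le_sum_of_subset_of_nonneg
      (fun v hv => mem_filter.mpr ⟨mem_univ v, (mem_filter.mp hv).2.le⟩) fun v _ _ =>
        mul_nonneg (hπ0 v) (sum_nonneg fun w _ => hP0 v w))
    have hv : f v = m := (mem_filter.mp hv).2
    rw [mul_comm]
    refine mul_le_mul_of_nonneg_left ((hL v hv).trans_eq (sum_congr ?_ fun _ _ => rfl)) (hπ0 v)
    exact filter_congr fun w _ => by omega
  have hin : ∑ v with ¬f v ≤ m, π v * ∑ w with f w ≤ m, P v w ≤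
      U * ∑ v with f v = m + 1, π v := by
    rw [mul_sum, ← sum_subset (s₁ := {v | f v = m + 1}) fun v hv =>
      mem_filter.mpr ⟨mem_univ v, by have := (mem_filter.mp hv).2; omega⟩]
    · refine sum_le_sum fun v hv => ?_
      have hv : f v = m + 1 := (mem_filter.mp hv).2
      refine (mul_le_mul_of_nonneg_left ((sum_congr ?_ fun _ _ => rfl).trans_le (hU v hv))
        (hπ0 v)).trans_eq (mul_comm _ _)
      exact filter_congr fun w _ => by omega
    · intro v hv hv'
      simp only [mem_filter, mem_univ, true_and] at hv hv'
      rw [sum_eq_zero fun w hw => hjump v w (by simp only [mem_filter] at hw; omega), mul_zero]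
  exact hout.trans ((stationary_flow_out_le_flow_in hπ0 hP1 hπ _).trans hin)

end StationaryCut

theorem pow_le_of_log_div_log_le {β x : ℝ} (hβ0 : 0 < β) (hβ1 : β < 1) (hx : 0 < x) {K : ℕ}
    (hK : Real.log x / Real.log β ≤ K) : β ^ K ≤ x := by
  rw [← Real.log_le_log_iff (pow_pos hβ0 K) hx, Real.log_pow]
  rwa [div_le_iff_of_neg (Real.log_neg hβ0 hβ1)] at hK

theorem sum_range_le_pow_div_of_le_mul {g : ℕ → ℝ} {β : ℝ} (hβ0 : 0 ≤ β) (hβ1 : β < 1)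
    {n : ℕ} (hn : g n ≤ 1) (hg : ∀ m < n, g m ≤ β * g (m + 1)) {k : ℕ} (hk : k ≤ n) :
    ∑ m ∈ range (k + 1), g m ≤ β ^ (n - k) / (1 - β) := by
  have hpow : ∀ m ≤ n, g m ≤ β ^ (n - m) := by
    intro m hm
    induction hm using Nat.decreasingInduction with
    | self => simpa using hn
    | of_succ m hmn ih =>
      calc g m ≤ β * g (m + 1) := hg m hmn
        _ ≤ β * β ^ (n - (m + 1)) := mul_le_mul_of_nonneg_left ih hβ0
        _ = β ^ (n - m) := by rw [← pow_succ', show n - (m + 1) + 1 = n - m by omega]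
  calc ∑ m ∈ range (k + 1), g m ≤ ∑ m ∈ range (k + 1), β ^ (n - k) * β ^ (k - m) :=
        sum_le_sum fun m hm => by
          rw [← pow_add, show n - k + (k - m) = n - m by simp at hm; omega]
          exact hpow m (by simp at hm; omega)
    _ = β ^ (n - k) * ∑ j ∈ range (k + 1), β ^ j := by
        rw [← mul_sum, ← sum_range_reflect (fun j => β ^ j)]
        simp
    _ ≤ β ^ (n - k) * (β ^ 0 / (1 - β)) := by
        rw [← Nat.Ico_zero_eq_range]
        exact mul_le_mul_of_nonneg_left (geom_sum_Ico_le_of_lt_one hβ0 hβ1) (pow_nonneg hβ0 _)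
    _ = β ^ (n - k) / (1 - β) := by rw [pow_zero, mul_one_div]

noncomputable section

namespace UrnState

variable {d N : ℕ}

def frac (v : UrnState d N) (k : Fin d) : ℝ := (v.1 k : ℝ) / N

theorem frac_nonneg (v : UrnState d N) (k : Fin d) : 0 ≤ v.frac k := by
  unfold frac; positivity

theorem sum_frac (hN : 1 ≤ N) (v : UrnState d N) : ∑ k, v.frac k = 1 := by
  have hv : ∑ k, ((v.1 k : ℕ) : ℝ) = N := by exact_mod_cast v.2
  simp only [frac, ← sum_div, hv]
  exact div_self (by positivity)

def IsMove (v w : UrnState d N) (a b : Fin d) : Prop :=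
  ∀ k, ((w.1 k : ℕ) : ℤ) = ((v.1 k : ℕ) : ℤ) + (if k = a then 1 else 0) - (if k = b then 1 else 0)

instance (v w : UrnState d N) (a b : Fin d) : Decidable (IsMove v w a b) := by
  unfold IsMove; infer_instance

theorem IsMove.unique {v w w' : UrnState d N} {a b : Fin d} (h : IsMove v w a b)
    (h' : IsMove v w' a b) : w = w' :=
  Subtype.ext <| funext fun k => Fin.ext <| by exact_mod_cast (h k).trans (h' k).symm

theorem exists_isMove (v : UrnState d N) {a b : Fin d} (hab : a ≠ b) (hb : 0 < (v.1 b : ℕ)) :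
    ∃ w, IsMove v w a b := by
  have hab_le : (v.1 a : ℕ) + v.1 b ≤ N := by
    calc (v.1 a : ℕ) + v.1 b = ∑ k ∈ {a, b}, (v.1 k : ℕ) :=
          (sum_pair (f := fun k => (v.1 k : ℕ)) hab).symm
      _ ≤ ∑ k, (v.1 k : ℕ) := sum_le_sum_of_subset (subset_univ _)
      _ = N := v.2
  let f : Fin d → Fin (N + 1) := fun k =>
    if k = a then ⟨v.1 a + 1, by omega⟩ else if k = b then ⟨v.1 b - 1, by omega⟩ else v.1 k
  have hf : ∀ k, ((f k : ℕ) : ℤ) =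
      ((v.1 k : ℕ) : ℤ) + (if k = a then 1 else 0) - (if k = b then 1 else 0) := by
    intro k
    by_cases hka : k = a
    · subst hka; simp [f, hab]
    · by_cases hkb : k = b
      · subst hkb; simp [f, hka]; omega
      · simp [f, hka, hkb]
  refine ⟨⟨f, ?_⟩, hf⟩
  have : ∑ k, ((f k : ℕ) : ℤ) = N := by
    simp only [hf, sum_sub_distrib, sum_add_distrib, sum_ite_eq', mem_univ, if_true]
    push_cast [← v.2]
    ring
  exact_mod_cast this

end UrnState

def urnUpBound (α r : ℝ) (d : ℕ) (p : ℝ) : ℝ :=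
  2 * (1 - r) * (1 / 2 + α) * p * (1 - p) + r / d * (1 - p)

def urnDownBound (α r : ℝ) (d : ℕ) (p : ℝ) : ℝ :=
  2 * (1 - r) * (1 / 2 - α) * p * (1 - p) + r / d * (d - 1) * p

theorem urnDownBound_le_mul_urnUpBound {α β r n x : ℝ} {d : ℕ} (hd : 0 < d) (hα0 : 0 < α)
    (hα2 : α ≤ 1 / 2) (hβ : β = (1 - α) / (1 + 2 * α)) (hr0 : 0 < r) (hr1 : r ≤ 1)
    (hrd : r ≤ 1 / d) (hn : 0 < n) (hx : 0 ≤ x) (hN1 : 2 * (1 - r) / n ^ 2 ≤ r / (n * d))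
    (hm : n * r ≤ α * (n - (x + 1))) :
    urnDownBound α r d ((x + 1) / n) ≤ β * urnUpBound α r d (x / n) := by
  set D : ℝ := (d : ℝ)
  have hD : 0 < D := by positivity
  have hxn : 0 < n - (x + 1) :=
    pos_of_mul_pos_right ((by positivity : 0 < n * r).trans_le hm) hα0.le
  have hβ0 : 0 < β := by rw [hβ]; apply div_pos <;> linarith
  have hβα : β * (1 + 2 * α) = 1 - α := by rw [hβ]; field_simp
  have hrD : r * D ≤ 1 := by rw [le_div_iff₀ hD] at hrd; linarith
  have hnD : 2 * (1 - r) * D ≤ r * n := by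
    rw [div_le_div_iff₀ (by positivity) (by positivity)] at hN1
    nlinarith
  have h1r : 0 ≤ 1 - r := by linarith
  -- Mutation away from the winner is outweighed by the selection margin `α`, ...
  have hsel : r * (D - 1) * (x + 1) * n ≤ (1 - r) * α * (x + 1) * (n - x - 1) * D := by
    have := mul_le_mul_of_nonneg_left hm (by positivity : 0 ≤ (1 - r) * (x + 1) * D)
    nlinarith [mul_nonneg (mul_nonneg (mul_nonneg hr0.le (by linarith : 0 ≤ x + 1)) hn.le)
      (sub_nonneg.mpr hrD)]
  -- ... and the one-ball shift between the two levels by mutation towards the winner.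
  have hmut : (1 - r) * (1 - α) * (n - x) * D ≤ β * r * (n - x) * n := by
    have h2β : 1 - α ≤ 2 * β := by nlinarith
    have hnx : 0 ≤ n - x := by linarith
    calc (1 - r) * (1 - α) * (n - x) * D ≤ 2 * β * ((1 - r) * (n - x) * D) := by
          nlinarith [mul_nonneg (mul_nonneg h1r hnx) hD.le]
      _ ≤ β * r * (n - x) * n := by nlinarith [mul_nonneg hβ0.le hnx]
  have key : 2 * (1 - r) * (1 / 2 - α) * (x + 1) * (n - x - 1) * D + r * (D - 1) * (x + 1) * n
      ≤ β * (2 * (1 - r) * (1 / 2 + α) * x * (n - x) * D + r * (n - x) * n) := by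
    have hexp : β * (2 * (1 - r) * (1 / 2 + α) * x * (n - x) * D + r * (n - x) * n) =
        (1 - r) * (1 - α) * x * (n - x) * D + β * r * (n - x) * n := by
      linear_combination ((1 - r) * x * (n - x) * D) * hβα
    rw [hexp]
    nlinarith [mul_nonneg (mul_nonneg h1r (by linarith : (0:ℝ) ≤ 1 - α)) (mul_nonneg hD.le
      (by linarith : 0 ≤ x + 1))]
  calc urnDownBound α r d ((x + 1) / n)
      = (2 * (1 - r) * (1 / 2 - α) * (x + 1) * (n - x - 1) * D + r * (D - 1) * (x + 1) * n)
          / (n ^ 2 * D) := by unfold urnDownBound; field_simp; ring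
    _ ≤ (β * (2 * (1 - r) * (1 / 2 + α) * x * (n - x) * D + r * (n - x) * n)) / (n ^ 2 * D) :=
        div_le_div_of_nonneg_right key (by positivity)
    _ = β * urnUpBound α r d (x / n) := by unfold urnUpBound; field_simp; ring

section UrnChain

variable {d N : ℕ} (M : Matrix (Fin d) (Fin d) ℝ) (r : ℝ)

open UrnState

def urnRate (v : UrnState d N) (a b : Fin d) : ℝ :=
  2 * (1 - r) * v.frac a * v.frac b * M a b + r / d * v.frac b

def urnStay (v : UrnState d N) : ℝ := (1 - r) * ∑ k, v.frac k ^ 2 + r / d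

theorem urnTransN_eq (v w : UrnState d N) : urnTransN d N M r v w =
    (if w = v then urnStay r v else 0) +
      ∑ a, ∑ b, if a ≠ b ∧ IsMove v w a b then urnRate M r v a b else 0 := rfl

variable {M r}

theorem urnRate_nonneg (hM0 : ∀ a b, 0 ≤ M a b) (hr0 : 0 ≤ r) (hr1 : r ≤ 1)
    (v : UrnState d N) (a b : Fin d) : 0 ≤ urnRate M r v a b := by
  have := hM0 a b
  have := v.frac_nonneg a
  have := v.frac_nonneg b
  unfold urnRate
  have : 0 ≤ 1 - r := by linarith
  positivity

theorem sum_urnTransN (v : UrnState d N) (S : Finset (UrnState d N)) :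
    ∑ w ∈ S, urnTransN d N M r v w = (if v ∈ S then urnStay r v else 0) +
      ∑ a, ∑ b, if a ≠ b ∧ ∃ w ∈ S, IsMove v w a b then urnRate M r v a b else 0 := by
  simp only [urnTransN_eq, sum_add_distrib, sum_ite_eq']
  congr 1
  rw [sum_comm]
  refine sum_congr rfl fun a _ => ?_
  rw [sum_comm]
  refine sum_congr rfl fun b _ => ?_
  rw [sum_ite_zero _ _ fun w _ w' _ hw hw' => hw.2.unique hw'.2]
  exact if_congr ⟨fun ⟨w, hw, hab, h⟩ => ⟨hab, w, hw, h⟩, fun ⟨hab, w, hw, h⟩ => ⟨w, hw, hab, h⟩⟩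
    rfl rfl

theorem urnTransN_nonneg (hM0 : ∀ a b, 0 ≤ M a b) (hr0 : 0 ≤ r) (hr1 : r ≤ 1)
    (v w : UrnState d N) : 0 ≤ urnTransN d N M r v w := by
  have : 0 ≤ urnStay r v := by
    unfold urnStay
    have : 0 ≤ 1 - r := by linarith
    positivity
  rw [urnTransN_eq]
  refine add_nonneg (by split_ifs <;> positivity) (sum_nonneg fun a _ => sum_nonneg fun b _ => ?_)
  split_ifs
  exacts [urnRate_nonneg hM0 hr0 hr1 v a b, le_rfl]

theorem sum_offDiag_urnRate (hN : 1 ≤ N) (hMsum : ∀ a b, a ≠ b → M a b + M b a = 1)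
    (v : UrnState d N) :
    ∑ a, ∑ b, (if a ≠ b then urnRate M r v a b else 0) =
      (1 - r) * (1 - ∑ k, v.frac k ^ 2) + r / d * (d - 1) := by
  set p := v.frac
  have hp : ∑ k, p k = 1 := v.sum_frac hN
  have hsymm : ∑ a, ∑ b, (if a ≠ b then p a * p b * M a b else 0) =
      ∑ a, ∑ b, (if a ≠ b then p a * p b * M b a else 0) := by
    rw [sum_comm]
    exact sum_congr rfl fun a _ => sum_congr rfl fun b _ => if_congr ne_comm (by ring) rfl
  have hpair : ∑ a, ∑ b, (if a ≠ b then p a * p b * M a b else 0) +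
      ∑ a, ∑ b, (if a ≠ b then p a * p b * M b a else 0) = 1 - ∑ k, p k ^ 2 := by
    calc _ = ∑ a, ∑ b, (if a ≠ b then p a * p b else 0) := by
          simp only [← sum_add_distrib]
          refine sum_congr rfl fun a _ => sum_congr rfl fun b _ => ?_
          split_ifs with hab
          · rw [← mul_add, hMsum a b hab, mul_one]
          · rw [add_zero]
      _ = 1 - ∑ k, p k ^ 2 := by
          rw [sum_ite_ne_eq_sub_diag, ← sum_mul_sum, hp, one_mul]
          simp only [sq]
  have hmut : ∑ a, ∑ b, (if a ≠ b then p b else 0) = d - 1 := by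
    rw [sum_ite_ne_eq_sub_diag, hp]
    simp
  calc _ = 2 * (1 - r) * ∑ a, ∑ b, (if a ≠ b then p a * p b * M a b else 0) +
        r / d * ∑ a, ∑ b, (if a ≠ b then p b else 0) := by
        simp only [mul_sum, ← sum_add_distrib]
        refine sum_congr rfl fun a _ => sum_congr rfl fun b _ => ?_
        split_ifs
        · simp only [urnRate, p]; ring
        · ring
    _ = _ := by rw [hmut]; linear_combination (1 - r) * hpair + (1 - r) * hsymm

theorem sum_urnTransN_le_one (hd : 0 < d) (hN : 1 ≤ N) (hM0 : ∀ a b, 0 ≤ M a b)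
    (hMsum : ∀ a b, a ≠ b → M a b + M b a = 1) (hr0 : 0 ≤ r) (hr1 : r ≤ 1)
    (v : UrnState d N) : ∑ w, urnTransN d N M r v w ≤ 1 := by
  rw [sum_urnTransN, if_pos (mem_univ v)]
  calc _ ≤ urnStay r v + ∑ a, ∑ b, (if a ≠ b then urnRate M r v a b else 0) := by
        gcongr with a _ b _
        split_ifs with h1 h2 h2
        · exact le_rfl
        · exact absurd h1.1 h2
        · exact urnRate_nonneg hM0 hr0 hr1 v a b
        · exact le_rfl
    _ = 1 := by
        rw [sum_offDiag_urnRate hN hMsum, urnStay]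
        have : (d : ℝ) ≠ 0 := by positivity
        field_simp
        ring

theorem urnTransN_eq_zero_of_add_one_lt {v w : UrnState d N} {i : Fin d}
    (h : (w.1 i : ℕ) + 1 < v.1 i) : urnTransN d N M r v w = 0 := by
  have hwv : w ≠ v := by rintro rfl; omega
  rw [urnTransN_eq, if_neg hwv, zero_add]
  refine sum_eq_zero fun a _ => sum_eq_zero fun b _ => if_neg fun ⟨_, hmove⟩ => ?_
  have := hmove i
  split_ifs at this <;> omega

theorem sum_urnTransN_down_le (hN : 1 ≤ N) (hM0 : ∀ a b, 0 ≤ M a b) (hr0 : 0 ≤ r)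
    (hr1 : r ≤ 1) {i : Fin d} {α : ℝ} (hMi : ∀ a, a ≠ i → M a i ≤ 1 / 2 - α)
    (v : UrnState d N) :
    ∑ w with (w.1 i : ℕ) < v.1 i, urnTransN d N M r v w ≤ urnDownBound α r d (v.frac i) := by
  rw [sum_urnTransN, if_neg (by simp), zero_add]
  -- a move that lowers `v_i` takes a ball from `i`
  calc _ ≤ ∑ a, ∑ b, (if b = i then (if a ≠ i then urnRate M r v a i else 0) else 0) := by
        gcongr with a _ b _
        split_ifs with hmove hbi hai hbi hai
        · rw [hbi]
        · exact absurd (hbi ▸ hmove.1) hai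
        · obtain ⟨w, hw, hwi⟩ := hmove.2
          have := hwi i
          simp only [mem_filter, mem_univ, true_and] at hw
          split_ifs at this <;> omega
        · exact urnRate_nonneg hM0 hr0 hr1 v a i
        all_goals exact le_rfl
    _ ≤ ∑ a, (if a ≠ i then 2 * (1 - r) * (1 / 2 - α) * v.frac i * v.frac a + r / d * v.frac i
          else 0) := by
        simp only [sum_ite_eq', mem_univ, if_true]
        gcongr with a _
        split_ifs with hai
        · have : 0 ≤ 2 * (1 - r) * v.frac a * v.frac i := by
            have := v.frac_nonneg a; have := v.frac_nonneg i
            have : 0 ≤ 1 - r := by linarith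
            positivity
          unfold urnRate
          nlinarith [mul_le_mul_of_nonneg_left (hMi a hai) this]
        · exact le_rfl
    _ = urnDownBound α r d (v.frac i) := by
        rw [sum_ite_ne_eq_sub, sum_add_distrib, ← mul_sum, v.sum_frac hN]
        simp [urnDownBound]
        ring

theorem urnUpBound_le_sum_urnTransN (hN : 1 ≤ N) (hM0 : ∀ a b, 0 ≤ M a b) (hr0 : 0 ≤ r)
    (hr1 : r ≤ 1) {i : Fin d} {α : ℝ} (hMi : ∀ b, b ≠ i → 1 / 2 + α ≤ M i b)
    (v : UrnState d N) :
    urnUpBound α r d (v.frac i) ≤ ∑ w with (v.1 i : ℕ) < w.1 i, urnTransN d N M r v w := by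
  rw [sum_urnTransN, if_neg (by simp), zero_add]
  refine le_trans ?_ (single_le_sum (fun a _ => sum_nonneg fun b _ => ?_) (mem_univ i))
  · calc urnUpBound α r d (v.frac i)
        = ∑ b, (if b ≠ i then (2 * (1 - r) * (1 / 2 + α) * v.frac i + r / d) * v.frac b
            else 0) := by
          rw [sum_ite_ne_eq_sub, ← mul_sum, v.sum_frac hN, urnUpBound]
          ring
      _ ≤ _ := sum_le_sum fun b _ => ?_
    split_ifs with hbi hmove hmove
    · have : 0 ≤ 2 * (1 - r) * v.frac i * v.frac b := by
        have := v.frac_nonneg i; have := v.frac_nonneg b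
        have : 0 ≤ 1 - r := by linarith
        positivity
      unfold urnRate
      nlinarith [mul_le_mul_of_nonneg_left (hMi b hbi) this]
    · -- the move `b → i` raises `v_i`, so it can only be missing when `v_b = 0`
      have hvb : (v.1 b : ℕ) = 0 := by
        by_contra hvb
        obtain ⟨w, hw⟩ := v.exists_isMove (Ne.symm hbi) (Nat.pos_of_ne_zero hvb)
        refine hmove ⟨Ne.symm hbi, w, mem_filter.mpr ⟨mem_univ w, ?_⟩, hw⟩
        have := hw i
        simp only [if_true, if_neg hbi.symm] at this
        omega
      simp [frac, hvb]
    · exact urnRate_nonneg hM0 hr0 hr1 v i b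
    · exact le_rfl
  · split_ifs
    exacts [urnRate_nonneg hM0 hr0 hr1 v a b, le_rfl]

theorem sum_level_le_mul_sum_level_succ (hN : 1 ≤ N) (hM0 : ∀ a b, 0 ≤ M a b)
    (hMsum : ∀ a b, a ≠ b → M a b + M b a = 1) {i : Fin d} {α β : ℝ} (hα0 : 0 < α)
    (hα2 : α ≤ 1 / 2) (hβ : β = (1 - α) / (1 + 2 * α)) (hr0 : 0 < r) (hr1 : r ≤ 1)
    (hrd : r ≤ 1 / d) (hN1 : 2 * (1 - r) / (N : ℝ) ^ 2 ≤ r / (N * d))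
    (hrow : ∀ b, b ≠ i → 1 / 2 + α ≤ M i b) (hcol : ∀ a, a ≠ i → M a i ≤ 1 / 2 - α)
    {π : UrnState d N → ℝ} (hπ0 : ∀ v, 0 ≤ π v)
    (hπ : ∀ w, ∑ v, π v * urnTransN d N M r v w = π w) {m : ℕ}
    (hm : (m + 1 : ℝ) ≤ N * (1 - r / α)) :
    ∑ v with (v.1 i : ℕ) = m, π v ≤ β * ∑ v with (v.1 i : ℕ) = m + 1, π v := by
  have hd : 0 < d := i.pos
  have hNR : (0 : ℝ) < N := by exact_mod_cast hN
  have hm' : N * r ≤ α * (N - (m + 1)) :=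
    calc (N : ℝ) * r = α * (N - N * (1 - r / α)) := by field_simp; ring
      _ ≤ α * (N - (m + 1)) := by gcongr
  have hmN : (m : ℝ) < N := by
    have := pos_of_mul_pos_right ((by positivity : (0 : ℝ) < N * r).trans_le hm') hα0.le
    linarith
  have hL : 0 < urnUpBound α r d (m / N) := by
    have hp1 : 0 < 1 - (m : ℝ) / N := by rw [sub_pos, div_lt_one hNR]; exact hmN
    have : 0 ≤ 2 * (1 - r) * (1 / 2 + α) * (m / N) * (1 - m / N) :=
      mul_nonneg (mul_nonneg (by nlinarith) (by positivity)) hp1.le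
    exact add_pos_of_nonneg_of_pos this (mul_pos (div_pos hr0 (by positivity)) hp1)
  have hflow := mul_sum_level_le_mul_sum_level_succ hπ0 (urnTransN_nonneg hM0 hr0.le hr1)
    (sum_urnTransN_le_one hd hN hM0 hMsum hr0.le hr1) hπ (fun v => (v.1 i : ℕ))
    (fun v w h => urnTransN_eq_zero_of_add_one_lt h) m
    (L := urnUpBound α r d (m / N)) (U := urnDownBound α r d ((m + 1) / N))
    (fun v hv => by
      convert urnUpBound_le_sum_urnTransN hN hM0 hr0.le hr1 hrow v using 2
      simp [frac, hv])
    (fun v hv => by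
      convert sum_urnTransN_down_le hN hM0 hr0.le hr1 hcol v using 2
      simp [frac, hv])
  have hratio := urnDownBound_le_mul_urnUpBound hd hα0 hα2 hβ hr0 hr1 hrd hNR
    (Nat.cast_nonneg m) hN1 hm'
  refine le_of_mul_le_mul_left ?_ hL
  calc _ ≤ _ := hflow
    _ ≤ β * urnUpBound α r d (m / N) * ∑ v with (v.1 i : ℕ) = m + 1, π v :=
        mul_le_mul_of_nonneg_right hratio (sum_nonneg fun v _ => hπ0 v)
    _ = _ := by ring

end UrnChain

end

theorem condorcet_margin_bounds {d : ℕ} {M : Matrix (Fin d) (Fin d) ℝ} (hM1 : ∀ a b, M a b ≤ 1)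
    (hMsum : ∀ a b, a ≠ b → M a b + M b a = 1) {i : Fin d} (hCW : ∀ j, j ≠ i → 1 / 2 < M i j)
    {α : ℝ} (hα : IsLeast {x : ℝ | ∃ j, j ≠ i ∧ x = M i j - 1 / 2} α) :
    0 < α ∧ α ≤ 1 / 2 ∧ (∀ b, b ≠ i → 1 / 2 + α ≤ M i b) ∧
      ∀ a, a ≠ i → M a i ≤ 1 / 2 - α := by
  obtain ⟨⟨j, hji, rfl⟩, hmin⟩ := hα
  have hrow : ∀ b, b ≠ i → 1 / 2 + (M i j - 1 / 2) ≤ M i b := fun b hb => by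
    linarith [hmin ⟨b, hb, rfl⟩]
  refine ⟨by linarith [hCW j hji], by linarith [hM1 i j], hrow, fun a ha => ?_⟩
  linarith [hrow a ha, hMsum i a ha.symm]

-- `n` is the top level of the geometric decay and `k` the top level below `N (1 - δ)`.
theorem exists_levels {N : ℕ} {α δ r y : ℝ} (hα0 : 0 < α) (hr0 : 0 < r) (hδ1 : δ < 1)
    (hrαδ : r ≤ α * δ / 2) (hy : (⌈y⌉ : ℝ) ≤ N * (δ - r / α)) :
    ∃ n k : ℕ, k ≤ n ∧ (n : ℝ) ≤ N * (1 - r / α) ∧ N * (1 - δ) < k + 1 ∧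
      y ≤ (n - k : ℕ) := by
  have hrα : r / α ≤ δ / 2 := by rw [div_le_iff₀ hα0]; linarith
  have hrα0 : 0 < r / α := div_pos hr0 hα0
  set n := ⌊(N : ℝ) * (1 - r / α)⌋₊
  set K := ⌈y⌉.toNat
  have hK : (K : ℝ) ≤ N * (δ - r / α) := by
    have : (K : ℝ) = max (⌈y⌉ : ℝ) 0 := by exact_mod_cast Int.toNat_eq_max ⌈y⌉
    rw [this]
    exact max_le hy (mul_nonneg (Nat.cast_nonneg N) (by linarith))
  have hn : N * (1 - r / α) < n + 1 := Nat.lt_floor_add_one _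
  have hKn : K ≤ n := Nat.lt_succ_iff.mp (by exact_mod_cast (show (K : ℝ) < n + 1 by nlinarith))
  refine ⟨n, n - K, Nat.sub_le n K, Nat.floor_le (mul_nonneg (Nat.cast_nonneg N) (by linarith)),
    ?_, ?_⟩
  · rw [Nat.cast_sub hKn]
    nlinarith
  · rw [Nat.sub_sub_self hKn]
    exact (Int.le_ceil y).trans (by exact_mod_cast Int.self_le_toNat ⌈y⌉)

theorem stmt19_general (d : ℕ) (M : Matrix (Fin d) (Fin d) ℝ)
    (hM0 : ∀ i j, 0 ≤ M i j) (hM1 : ∀ i j, M i j ≤ 1)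
    (hMsum : ∀ i j, i ≠ j → M i j + M j i = 1)
    (i : Fin d) (hCW : ∀ j, j ≠ i → 1 / 2 < M i j)
    (α β : ℝ) (hα : IsLeast {x : ℝ | ∃ j, j ≠ i ∧ x = M i j - 1 / 2} α)
    (hβ : β = (1 - α) / (1 + 2 * α))
    (δ τ r : ℝ) (hδ1 : δ < 1) (hτ : 0 < τ)
    (hr0 : 0 < r) (hr1 : r ≤ 1) (hrd : r ≤ 1 / (d : ℝ)) (hrαδ : r ≤ α * δ / 2)
    (N : ℕ) (hN : 1 ≤ N)
    (hN1 : 2 * (1 - r) / (N : ℝ) ^ 2 ≤ r / ((N : ℝ) * d))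
    (hN2 : ((⌈Real.log (τ * (1 - β)) / Real.log β⌉ : ℤ) : ℝ) ≤ (N : ℝ) * (δ - r / α))
    -- `π` is the stationary distribution of the urn process
    (π : UrnState d N → ℝ) (hπ0 : ∀ v, 0 ≤ π v) (hπ1 : ∑ v, π v = 1)
    (hπstat : ∀ w, ∑ v, π v * urnTransN d N M r v w = π w) :
    1 - τ ≤ ∑ v ∈ Finset.univ.filter
      (fun v : UrnState d N => 1 - δ ≤ (v.1 i : ℝ) / N), π v := by
  obtain ⟨hα0, hα2, hrow, hcol⟩ := condorcet_margin_bounds hM1 hMsum hCW hα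
  have hβ0 : 0 < β := hβ ▸ div_pos (by linarith) (by linarith)
  have hβ1 : β < 1 := by rw [hβ, div_lt_one (by linarith)]; linarith
  obtain ⟨n, k, hkn, hn, hk, hK⟩ := exists_levels hα0 hr0 hδ1 hrαδ hN2
  have hlow : ∑ v with (v.1 i : ℕ) ≤ k, π v ≤ τ := by
    rw [sum_filter_le_eq_sum_range]
    calc _ ≤ β ^ (n - k) / (1 - β) :=
          sum_range_le_pow_div_of_le_mul (g := fun m => ∑ v with (v.1 i : ℕ) = m, π v) hβ0.le hβ1
            ((sum_le_sum_of_subset_of_nonneg (filter_subset _ _) fun v _ _ => hπ0 v).trans_eq hπ1)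
            (fun m hm => sum_level_le_mul_sum_level_succ hN hM0 hMsum hα0 hα2 hβ hr0 hr1 hrd hN1
              hrow hcol hπ0 hπstat (le_trans (by exact_mod_cast Nat.succ_le_of_lt hm) hn)) hkn
      _ ≤ τ := by
          rw [div_le_iff₀ (by linarith)]
          exact pow_le_of_log_div_log_le hβ0 hβ1 (mul_pos hτ (by linarith)) hK
  have hbad : ∑ v with ¬(1 - δ ≤ (v.1 i : ℝ) / N), π v ≤ ∑ v with (v.1 i : ℕ) ≤ k, π v := by
    refine sum_le_sum_of_subset_of_nonneg (fun v hv => ?_) fun v _ _ => hπ0 v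
    simp only [mem_filter, mem_univ, true_and, not_le] at hv ⊢
    rw [div_lt_iff₀ (by exact_mod_cast hN)] at hv
    exact Nat.lt_succ_iff.mp (by exact_mod_cast (show ((v.1 i : ℕ) : ℝ) < k + 1 by linarith))
  linarith [sum_filter_add_sum_filter_not univ (fun v : UrnState d N => 1 - δ ≤ (v.1 i : ℝ) / N) π]

/-- If alternative `i` is a Condorcet winner, `α = min_{j≠i} M(i,j) − 1/2`,
`β = (1−α)/(1+2α)`, the mutation rate satisfies `r ≤ 1/d` and `r ≤ αδ/2`, and `N` is
large enough (`r/(Nd) ≥ 2(1−r)/N²` and `N(δ − r/α) ≥ ⌈log(τ(1−β))/log β⌉`), then the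
stationary distribution of the urn process puts probability at least `1 − τ` on states
where at least a `1−δ` fraction of the balls are labeled with the Condorcet winner. -/
theorem stmt19 (d : ℕ) (hd : 1 ≤ d) (M : Matrix (Fin d) (Fin d) ℝ)
    (hM0 : ∀ i j, 0 ≤ M i j) (hM1 : ∀ i j, M i j ≤ 1)
    (hMsum : ∀ i j, i ≠ j → M i j + M j i = 1)
    (i : Fin d) (hCW : ∀ j, j ≠ i → 1 / 2 < M i j)
    (α β : ℝ) (hα : IsLeast {x : ℝ | ∃ j, j ≠ i ∧ x = M i j - 1 / 2} α)
    (hβ : β = (1 - α) / (1 + 2 * α))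
    (δ τ r : ℝ) (hδ0 : 0 < δ) (hδ1 : δ < 1) (hτ : 0 < τ)
    (hr0 : 0 < r) (hr1 : r ≤ 1) (hrd : r ≤ 1 / (d : ℝ)) (hrαδ : r ≤ α * δ / 2)
    (N : ℕ) (hN : 1 ≤ N)
    (hN1 : 2 * (1 - r) / (N : ℝ) ^ 2 ≤ r / ((N : ℝ) * d))
    (hN2 : ((⌈Real.log (τ * (1 - β)) / Real.log β⌉ : ℤ) : ℝ) ≤ (N : ℝ) * (δ - r / α))
    -- `π` is the stationary distribution of the urn process
    (π : UrnState d N → ℝ) (hπ0 : ∀ v, 0 ≤ π v) (hπ1 : ∑ v, π v = 1)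
    (hπstat : ∀ w, ∑ v, π v * urnTransN d N M r v w = π w) :
    1 - τ ≤ ∑ v ∈ Finset.univ.filter
      (fun v : UrnState d N => 1 - δ ≤ (v.1 i : ℝ) / N), π v :=
  stmt19_general d M hM0 hM1 hMsum i hCW α β hα hβ δ τ r hδ1 hτ hr0 hr1 hrd hrαδ N hN hN1 hN2 π hπ0
    hπ1 hπstat
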